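/- Let V be a finite-dimensional real vector space and L ⊆ 𝕋_ℂV a lagrangian subspace. With E := pr_{V_ℂ}(L), Δ := (E ∩ Ē) ∩ V, D := (E + Ē) ∩ V, order s := dim_ℝ V − dim_ℝ D and type k := dim_ℂ(E + Ē) − dim_ℂ E, the following identities hold: k = (1/2)(dim_ℝ D − dim_ℝ Δ) and k + s = dim_ℂ V_ℂ − dim_ℂ E. -/

import Mathlib

open TensorProduct Module

noncomputable section

namespace CDirac


/-- The real generalized tangent space `V ⊕ V*`. -/
abbrev TR (V : Type*) [AddCommGroup V] [Module ℝ V] := V × (V →ₗ[ℝ] ℝ)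

variable {V : Type*} [AddCommGroup V] [Module ℝ V]

/-- The canonical pairing `⟨X+ξ, Y+η⟩ = (η X + ξ Y)/2` on `𝕋V`. -/
def pairR (a b : TR V) : ℝ := (b.2 a.1 + a.2 b.1) / 2

lemma pairR_add_left (a a' b : TR V) : pairR (a + a') b = pairR a b + pairR a' b := by
  simp only [pairR, Prod.fst_add, Prod.snd_add, map_add, LinearMap.add_apply]
  ring

lemma pairR_smul_left (c : ℝ) (a b : TR V) : pairR (c • a) b = c * pairR a b := by
  simp only [pairR, Prod.smul_fst, Prod.smul_snd, map_smul, LinearMap.smul_apply,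
    smul_eq_mul]
  ring

/-- Orthogonal complement with respect to the pairing on `𝕋V`. -/
def orthR (L : Submodule ℝ (TR V)) : Submodule ℝ (TR V) where
  carrier := {a | ∀ b ∈ L, pairR a b = 0}
  zero_mem' := fun b _ => by simp [pairR]
  add_mem' := fun {a a'} ha ha' b hb => by
    rw [pairR_add_left, ha b hb, ha' b hb, add_zero]
  smul_mem' := fun c a ha b hb => by rw [pairR_smul_left, ha b hb, mul_zero]

/-- A real lagrangian subspace: `L = L^⊥`. -/
def IsLagrangianR (L : Submodule ℝ (TR V)) : Prop := L = orthR L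

/-- An isotropic subspace of `𝕋V`. -/
def IsIsotropicR (K : Submodule ℝ (TR V)) : Prop := ∀ a ∈ K, ∀ b ∈ K, pairR a b = 0

/-- The quotient `K^⊥/K`. -/
abbrev quotK (K : Submodule ℝ (TR V)) :=
  @HasQuotient.Quotient ↥(orthR K) (Submodule ℝ ↥(orthR K))
    (@Submodule.hasQuotient ℝ ↥(orthR K) _ _ _) (K.comap (orthR K).subtype)

/-- The quotient map `K^⊥ → K^⊥/K`. -/
def mkK (K : Submodule ℝ (TR V)) : ↥(orthR K) →ₗ[ℝ] quotK K :=
  @Submodule.mkQ ℝ ↥(orthR K) _ (orthR K).addCommGroup (orthR K).module (K.comap (orthR K).subtype)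




/-- The complexification `V_ℂ = ℂ ⊗_ℝ V`. -/
abbrev Cx (V : Type*) [AddCommGroup V] [Module ℝ V] := ℂ ⊗[ℝ] V

/-- The complex dual `(V_ℂ)^*`. -/
abbrev DualC (V : Type*) [AddCommGroup V] [Module ℝ V] := Cx V →ₗ[ℂ] ℂ

/-- The complexified generalized tangent space `𝕋_ℂ V = V_ℂ ⊕ (V_ℂ)^*`. -/
abbrev TCx (V : Type*) [AddCommGroup V] [Module ℝ V] := Cx V × DualC V

/-- The ℂ-bilinear pairing on `𝕋_ℂ V`. -/
def pairC (a b : TCx V) : ℂ := (b.2 a.1 + a.2 b.1) / 2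

lemma pairC_add_left (a a' b : TCx V) : pairC (a + a') b = pairC a b + pairC a' b := by
  simp only [pairC, Prod.fst_add, Prod.snd_add, map_add, LinearMap.add_apply]
  ring

lemma pairC_smul_left (c : ℂ) (a b : TCx V) : pairC (c • a) b = c * pairC a b := by
  simp only [pairC, Prod.smul_fst, Prod.smul_snd, map_smul, LinearMap.smul_apply,
    smul_eq_mul]
  ring

/-- Orthogonal complement with respect to the ℂ-bilinear pairing on `𝕋_ℂ V`. -/
def orthC (L : Submodule ℂ (TCx V)) : Submodule ℂ (TCx V) where
  carrier := {a | ∀ b ∈ L, pairC a b = 0}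
  zero_mem' := fun b _ => by simp [pairC]
  add_mem' := fun {a a'} ha ha' b hb => by
    rw [pairC_add_left, ha b hb, ha' b hb, add_zero]
  smul_mem' := fun c a ha b hb => by rw [pairC_smul_left, ha b hb, mul_zero]

/-- A complex lagrangian subspace: `L = L^⊥`. -/
def IsLagrangianC (L : Submodule ℂ (TCx V)) : Prop := L = orthC L

private lemma conjCxAux_smul (z : ℂ) (x : Cx V) :
    TensorProduct.map Complex.conjAe.toLinearMap LinearMap.id (z • x) =
      starRingEnd ℂ z • TensorProduct.map Complex.conjAe.toLinearMap LinearMap.id x := by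
  induction x using TensorProduct.induction_on with
  | zero => simp
  | tmul w v => simp [smul_tmul', smul_eq_mul, Complex.conjAe_coe, map_mul]
  | add x y hx hy => simp only [smul_add, map_add, hx, hy]

/-- Conjugation on `V_ℂ`, as a `conj`-semilinear map. -/
def conjCx : Cx V →ₛₗ[starRingEnd ℂ] Cx V where
  toFun := TensorProduct.map Complex.conjAe.toLinearMap LinearMap.id
  map_add' := map_add _
  map_smul' := conjCxAux_smul

lemma conjCx_smul (z : ℂ) (x : Cx V) :
    conjCx (z • x) = starRingEnd ℂ z • conjCx x := conjCxAux_smul z x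

/-- Conjugation of a complex linear functional. -/
def conjDualFun (ξ : DualC V) : DualC V where
  toFun x := starRingEnd ℂ (ξ (conjCx x))
  map_add' x y := by simp
  map_smul' z x := by
    rw [conjCx_smul, map_smul, smul_eq_mul, map_mul, RingHom.id_apply]
    simp [smul_eq_mul]

/-- Conjugation on `(V_ℂ)^*`, as a `conj`-semilinear map. -/
def conjDual : DualC V →ₛₗ[starRingEnd ℂ] DualC V where
  toFun := conjDualFun
  map_add' ξ η := by ext x; simp [conjDualFun]
  map_smul' z ξ := by
    ext x
    simp [conjDualFun, smul_eq_mul, map_mul]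

/-- Conjugation on `𝕋_ℂ V`, as a `conj`-semilinear map. -/
def conjT : TCx V →ₛₗ[starRingEnd ℂ] TCx V where
  toFun a := (conjCx a.1, conjDual a.2)
  map_add' a b := by simp [Prod.ext_iff]
  map_smul' z a := by
    simp [Prod.ext_iff, Prod.smul_fst, Prod.smul_snd, map_smulₛₗ]

instance : RingHomSurjective (starRingEnd ℂ) :=
  ⟨fun z => ⟨starRingEnd ℂ z, by simp⟩⟩

/-- The conjugate `L̄` of a ℂ-subspace of `𝕋_ℂ V`. -/
def conjSub (L : Submodule ℂ (TCx V)) : Submodule ℂ (TCx V) := L.map conjT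

/-- The conjugate `Ē` of a ℂ-subspace of `V_ℂ`. -/
def conjE (E : Submodule ℂ (Cx V)) : Submodule ℂ (Cx V) := E.map conjCx

/-- The canonical inclusion `V → V_ℂ`, `v ↦ 1 ⊗ v`. -/
def iV : V →ₗ[ℝ] Cx V := TensorProduct.mk ℝ ℂ V 1





/-- ℝ-linear auxiliary version of the ℂ-linear extension of a real functional. -/
def dualExtAux (α : V →ₗ[ℝ] ℝ) : Cx V →ₗ[ℝ] ℂ :=
  TensorProduct.lift
    (LinearMap.mk₂ ℝ (fun z v => z * (α v : ℂ))
      (fun z w v => by push_cast; ring)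
      (fun r z v => by simp only [Complex.real_smul]; ring)
      (fun z v w => by push_cast [map_add]; ring)
      (fun r z v => by simp only [map_smul, smul_eq_mul, Complex.real_smul]; push_cast; ring))

private lemma dualExtAux_smulC (α : V →ₗ[ℝ] ℝ) (z : ℂ) (x : Cx V) :
    dualExtAux α (z • x) = z * dualExtAux α x := by
  induction x using TensorProduct.induction_on with
  | zero => simp
  | tmul w v =>
      simp only [dualExtAux, smul_tmul', lift.tmul, LinearMap.mk₂_apply, smul_eq_mul]
      ring
  | add x y hx hy => simp only [smul_add, map_add, hx, hy]; ring

/-- The ℂ-linear extension of a real functional `α : V → ℝ` to `V_ℂ`. -/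
def dualExtFun (α : V →ₗ[ℝ] ℝ) : DualC V where
  toFun := dualExtAux α
  map_add' := map_add _
  map_smul' z x := by simpa using dualExtAux_smulC α z x

private lemma dualExtFun_tmul (α : V →ₗ[ℝ] ℝ) (z : ℂ) (v : V) :
    dualExtFun α (z ⊗ₜ[ℝ] v) = z * (α v : ℂ) := by
  simp [dualExtFun, dualExtAux]

/-- The ℂ-linear extension map `V^* → (V_ℂ)^*`, as an ℝ-linear map. -/
def dualExt : (V →ₗ[ℝ] ℝ) →ₗ[ℝ] DualC V where
  toFun := dualExtFun
  map_add' α β := by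
    apply LinearMap.ext; intro x
    induction x using TensorProduct.induction_on with
    | zero => simp
    | tmul w v =>
        simp only [dualExtFun_tmul, LinearMap.add_apply]
        push_cast
        ring
    | add x y hx hy =>
        simp only [map_add, LinearMap.add_apply] at *
        rw [hx, hy]
  map_smul' r α := by
    apply LinearMap.ext; intro x
    induction x using TensorProduct.induction_on with
    | zero => simp
    | tmul w v =>
        simp only [dualExtFun_tmul, RingHom.id_apply, LinearMap.smul_apply,
          LinearMap.smul_apply, smul_eq_mul, Complex.real_smul]
        push_cast
        ring
    | add x y hx hy =>
        simp only [map_add, RingHom.id_apply, LinearMap.smul_apply, smul_eq_mul] at *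
        rw [hx, hy]

/-- The canonical inclusion `𝕋V → 𝕋_ℂV`. -/
def iT : TR V →ₗ[ℝ] TCx V where
  toFun a := (iV a.1, dualExt a.2)
  map_add' a b := by simp [Prod.ext_iff]
  map_smul' r a := by simp [Prod.ext_iff]



/-- Auxiliary ℝ-linear version of the ℂ-bilinear extension of a real bilinear form. -/
def bilinExtAux (B : V →ₗ[ℝ] V →ₗ[ℝ] ℝ) : Cx V →ₗ[ℝ] DualC V :=
  TensorProduct.lift
    (LinearMap.mk₂ ℝ (fun z v => z • dualExt (B v))
      (fun z w v => by simp only [add_smul])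
      (fun r z v => by simp only [smul_assoc])
      (fun z v w => by simp only [map_add, smul_add])
      (fun r z v => by simp only [map_smul]; exact smul_comm z r _))

private lemma bilinExtAux_smulC (B : V →ₗ[ℝ] V →ₗ[ℝ] ℝ) (z : ℂ) (x : Cx V) :
    bilinExtAux B (z • x) = z • bilinExtAux B x := by
  induction x using TensorProduct.induction_on with
  | zero => simp
  | tmul w v =>
      simp only [bilinExtAux, smul_tmul', lift.tmul, LinearMap.mk₂_apply, smul_eq_mul,
        mul_smul]
  | add x y hx hy => simp only [smul_add, map_add, hx, hy]

/-- The ℂ-bilinear extension of a real bilinear form `B : V × V → ℝ` to `V_ℂ`. -/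
def bilinExt (B : V →ₗ[ℝ] V →ₗ[ℝ] ℝ) : Cx V →ₗ[ℂ] DualC V where
  toFun := bilinExtAux B
  map_add' := map_add _
  map_smul' z x := by simpa using bilinExtAux_smulC B z x

/-- The `B`-transformation `e^B(X+ξ) = X + ξ + B̃(X,·)` of `𝕋_ℂV`, for a real `B`. -/
def eB (B : V →ₗ[ℝ] V →ₗ[ℝ] ℝ) : TCx V →ₗ[ℂ] TCx V where
  toFun a := (a.1, a.2 + bilinExt B a.1)
  map_add' a b := by
    simp only [Prod.fst_add, Prod.snd_add, map_add, Prod.mk_add_mk, Prod.mk.injEq]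
    exact ⟨trivial, by abel⟩
  map_smul' z a := by
    simp only [Prod.smul_fst, Prod.smul_snd, map_smul, RingHom.id_apply, Prod.smul_mk,
      Prod.mk.injEq, smul_add]

/-- The real `B`-transformation `e^B(X+α) = X + α + B(X,·)` of `𝕋V`. -/
def eBR (B : V →ₗ[ℝ] V →ₗ[ℝ] ℝ) : TR V →ₗ[ℝ] TR V where
  toFun a := (a.1, a.2 + B a.1)
  map_add' a b := by
    simp only [Prod.fst_add, Prod.snd_add, map_add, Prod.mk_add_mk, Prod.mk.injEq]
    exact ⟨trivial, by abel⟩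
  map_smul' r a := by
    simp only [Prod.smul_fst, Prod.smul_snd, map_smul, RingHom.id_apply, Prod.smul_mk,
      Prod.mk.injEq, smul_add]


/-- The range `E = pr_{V_ℂ}(L)` of a subspace of `𝕋_ℂV`. -/
def Esub (L : Submodule ℂ (TCx V)) : Submodule ℂ (Cx V) :=
  L.map (LinearMap.fst ℂ (Cx V) (DualC V))

/-- The real index `r = dim_ℂ (L ∩ L̄)`. -/
def riL (L : Submodule ℂ (TCx V)) : ℕ := finrank ℂ ↥(L ⊓ conjSub L)

/-- The real part `K = (L ∩ L̄) ∩ 𝕋V`, as a subspace of `𝕋V`. -/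
def Ksub (L : Submodule ℂ (TCx V)) : Submodule ℝ (TR V) :=
  ((L ⊓ conjSub L).restrictScalars ℝ).comap iT

/-- The distribution `D = (E + Ē) ∩ V`, as a subspace of `V`. -/
def Dsub (L : Submodule ℂ (TCx V)) : Submodule ℝ V :=
  ((Esub L ⊔ conjE (Esub L)).restrictScalars ℝ).comap iV

/-- The distribution `Δ = (E ∩ Ē) ∩ V`, as a subspace of `V`. -/
def DeltaSub (L : Submodule ℂ (TCx V)) : Submodule ℝ V :=
  ((Esub L ⊓ conjE (Esub L)).restrictScalars ℝ).comap iV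

/-- The order `s = dim V - dim D`. -/
def orderL (L : Submodule ℂ (TCx V)) : ℕ := finrank ℝ V - finrank ℝ ↥(Dsub L)

/-- The (normalized) type `k = dim_ℂ(E + Ē) - dim_ℂ E`. -/
def typeL (L : Submodule ℂ (TCx V)) : ℕ :=
  finrank ℂ ↥(Esub L ⊔ conjE (Esub L)) - finrank ℂ ↥(Esub L)


end CDirac

open CDirac Module

/-!
Conjugation is a semilinear isomorphism `E ≅ Ē`, and a conjugation-invariant subspace
`W ⊆ V_ℂ` is the complexification of its real points, so `dim_ℝ (W ∩ V) = dim_ℂ W`. Applied to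
`W = E + Ē` and `W = E ∩ Ē`, both identities reduce to the Grassmann formula
`dim (E + Ē) + dim (E ∩ Ē) = 2 dim E` and to `dim_ℂ V_ℂ = dim_ℝ V`.
-/

namespace CDirac

variable {V : Type*} [AddCommGroup V] [Module ℝ V]

/-- The real points `W ∩ V` of a subspace `W ⊆ V_ℂ`. -/
def realPoints (W : Submodule ℂ (Cx V)) : Submodule ℝ V := (W.restrictScalars ℝ).comap iV

def reCx : Cx V →ₗ[ℝ] V := TensorProduct.lift ((LinearMap.lsmul ℝ V).comp Complex.reLm)

def imCx : Cx V →ₗ[ℝ] V := TensorProduct.lift ((LinearMap.lsmul ℝ V).comp Complex.imLm)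

@[simp] lemma reCx_tmul (z : ℂ) (v : V) : reCx (z ⊗ₜ[ℝ] v) = z.re • v := rfl

@[simp] lemma imCx_tmul (z : ℂ) (v : V) : imCx (z ⊗ₜ[ℝ] v) = z.im • v := rfl

lemma iV_apply (v : V) : iV v = (1 : ℂ) ⊗ₜ[ℝ] v := rfl

@[simp] lemma conjCx_tmul (z : ℂ) (v : V) : conjCx (z ⊗ₜ[ℝ] v) = starRingEnd ℂ z ⊗ₜ[ℝ] v := by
  simp [conjCx, Complex.conjAe_coe]

lemma conjCx_conjCx (x : Cx V) : conjCx (conjCx x) = x := by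
  induction x using TensorProduct.induction_on with
  | zero => simp
  | tmul z v => simp
  | add x y hx hy => rw [map_add, map_add, hx, hy]

lemma I_smul_iV (v : V) : Complex.I • iV v = Complex.I ⊗ₜ[ℝ] v := by
  rw [iV_apply, smul_tmul', smul_eq_mul, mul_one]

@[simp] lemma reCx_iV (v : V) : reCx (iV v) = v := by simp [iV_apply]

@[simp] lemma imCx_iV (v : V) : imCx (iV v) = 0 := by simp [iV_apply]

@[simp] lemma reCx_I_smul_iV (v : V) : reCx (Complex.I • iV v) = 0 := by simp [I_smul_iV]

@[simp] lemma imCx_I_smul_iV (v : V) : imCx (Complex.I • iV v) = v := by simp [I_smul_iV]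

lemma iV_reCx_add_I_smul_iV_imCx (x : Cx V) : iV (reCx x) + Complex.I • iV (imCx x) = x := by
  induction x using TensorProduct.induction_on with
  | zero => simp
  | tmul z v =>
    rw [I_smul_iV, reCx_tmul, imCx_tmul, iV_apply, tmul_smul, tmul_smul, smul_tmul',
      smul_tmul', ← add_tmul]
    congr 1
    simp
  | add x y hx hy =>
    rw [map_add, map_add, map_add, map_add, smul_add]
    conv_rhs => rw [← hx, ← hy]
    abel

lemma iV_reCx_sub_I_smul_iV_imCx (x : Cx V) :
    iV (reCx x) - Complex.I • iV (imCx x) = conjCx x := by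
  induction x using TensorProduct.induction_on with
  | zero => simp
  | tmul z v =>
    rw [I_smul_iV, reCx_tmul, imCx_tmul, iV_apply, tmul_smul, tmul_smul, smul_tmul',
      smul_tmul', ← sub_tmul, conjCx_tmul]
    congr 1
    simp [Complex.ext_iff]
  | add x y hx hy =>
    rw [map_add, map_add, map_add, map_add, smul_add, map_add]
    conv_rhs => rw [← hx, ← hy]
    abel

section ConjInvariant

variable {W : Submodule ℂ (Cx V)} (hW : ∀ x ∈ W, conjCx x ∈ W)
include hW

lemma reCx_mem_realPoints {x : Cx V} (hx : x ∈ W) : reCx x ∈ realPoints W := by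
  have h : iV (reCx x) = (2⁻¹ : ℂ) • (x + conjCx x) := by
    linear_combination (norm := module) (2⁻¹ : ℂ) • (iV_reCx_add_I_smul_iV_imCx x +
      iV_reCx_sub_I_smul_iV_imCx x)
  show iV (reCx x) ∈ W
  rw [h]
  exact W.smul_mem _ (W.add_mem hx (hW x hx))

lemma imCx_mem_realPoints {x : Cx V} (hx : x ∈ W) : imCx x ∈ realPoints W := by
  have h : iV (imCx x) = (-(2⁻¹ * Complex.I) : ℂ) • (x - conjCx x) := by
    linear_combination (norm := skip) (-(2⁻¹ * Complex.I) : ℂ) •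
      (iV_reCx_add_I_smul_iV_imCx x - iV_reCx_sub_I_smul_iV_imCx x)
    match_scalars <;> ring_nf
    simp
  show iV (imCx x) ∈ W
  rw [h]
  exact W.smul_mem _ (W.sub_mem hx (hW x hx))

def realPointsProdEquiv : (realPoints W × realPoints W) ≃ₗ[ℝ] W where
  toFun p := ⟨iV (p.1 : V) + Complex.I • iV (p.2 : V), W.add_mem p.1.2 (W.smul_mem _ p.2.2)⟩
  invFun x := (⟨reCx x, reCx_mem_realPoints hW x.2⟩, ⟨imCx x, imCx_mem_realPoints hW x.2⟩)
  map_add' p q := by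
    ext
    simp only [Prod.fst_add, Prod.snd_add, Submodule.coe_add, map_add, smul_add]
    abel
  map_smul' r p := by
    ext
    simp only [Prod.smul_fst, Prod.smul_snd, SetLike.val_smul, map_smul, RingHom.id_apply]
    rw [Submodule.coe_smul_of_tower, smul_add, smul_comm r Complex.I]
  left_inv p := by ext <;> simp
  right_inv x := Subtype.ext (iV_reCx_add_I_smul_iV_imCx (x : Cx V))

lemma finrank_realPoints [FiniteDimensional ℝ V] :
    finrank ℝ (realPoints W) = finrank ℂ W := by
  have h := (realPointsProdEquiv hW).finrank_eq
  rw [Module.finrank_prod, ← Module.finrank_mul_finrank ℝ ℂ W, Complex.finrank_real_complex] at h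
  omega

end ConjInvariant

lemma mem_conjE {E : Submodule ℂ (Cx V)} {x : Cx V} : x ∈ conjE E ↔ conjCx x ∈ E :=
  ⟨fun ⟨y, hy, hyx⟩ => hyx ▸ (conjCx_conjCx y).symm ▸ hy,
    fun hx => ⟨conjCx x, hx, conjCx_conjCx x⟩⟩

lemma conjCx_mem_sup_conjE {E : Submodule ℂ (Cx V)} {x : Cx V} (hx : x ∈ E ⊔ conjE E) :
    conjCx x ∈ E ⊔ conjE E := by
  obtain ⟨y, hy, z, hz, rfl⟩ := Submodule.mem_sup.1 hx
  rw [map_add]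
  exact add_mem (Submodule.mem_sup_right ⟨y, hy, rfl⟩) (Submodule.mem_sup_left (mem_conjE.1 hz))

lemma conjCx_mem_inf_conjE {E : Submodule ℂ (Cx V)} {x : Cx V} (hx : x ∈ E ⊓ conjE E) :
    conjCx x ∈ E ⊓ conjE E :=
  ⟨mem_conjE.1 hx.2, mem_conjE.2 ((conjCx_conjCx x).symm ▸ hx.1)⟩

lemma finrank_conjE (E : Submodule ℂ (Cx V)) : finrank ℂ (conjE E) = finrank ℂ E := by
  let e : E ≃+ conjE E :=
    { toFun x := ⟨conjCx x, Submodule.mem_map_of_mem x.2⟩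
      invFun y := ⟨conjCx y, mem_conjE.1 y.2⟩
      left_inv x := Subtype.ext (conjCx_conjCx (x : Cx V))
      right_inv y := Subtype.ext (conjCx_conjCx (y : Cx V))
      map_add' x y := Subtype.ext (map_add conjCx (x : Cx V) y) }
  have h := rank_eq_of_equiv_equiv (starRingEnd ℂ) e star_involutive.bijective
    (fun z x => Subtype.ext (conjCx_smul z (x : Cx V)))
  exact (congr_arg Cardinal.toNat h).symm

end CDirac

open CDirac Module

theorem stmt9_general (V : Type*) [AddCommGroup V] [Module ℝ V] [FiniteDimensional ℝ V]
    (E : Submodule ℂ (Cx V))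
    (D : Submodule ℝ V) (hD : D = ((E ⊔ conjE E).restrictScalars ℝ).comap iV)
    (Δ : Submodule ℝ V) (hΔ : Δ = ((E ⊓ conjE E).restrictScalars ℝ).comap iV)
    (k s : ℕ)
    (hk : (k : ℚ) = (finrank ℂ ↥(E ⊔ conjE E) : ℚ) - (finrank ℂ ↥E : ℚ))
    (hs : (s : ℚ) = (finrank ℝ V : ℚ) - (finrank ℝ ↥D : ℚ)) :
    (k : ℚ) = ((finrank ℝ ↥D : ℚ) - (finrank ℝ ↥Δ : ℚ)) / 2 ∧
    (k : ℚ) + (s : ℚ) = (finrank ℂ (Cx V) : ℚ) - (finrank ℂ ↥E : ℚ) := by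
  have hV : finrank ℂ (Cx V) = finrank ℝ V := Module.finrank_baseChange
  have hDdim : finrank ℝ D = finrank ℂ ↥(E ⊔ conjE E) :=
    hD ▸ finrank_realPoints fun _ => conjCx_mem_sup_conjE
  have hΔdim : finrank ℝ Δ = finrank ℂ ↥(E ⊓ conjE E) :=
    hΔ ▸ finrank_realPoints fun _ => conjCx_mem_inf_conjE
  have hgrassmann := Submodule.finrank_sup_add_finrank_inf_eq E (conjE E)
  rw [finrank_conjE, ← two_mul] at hgrassmann
  constructor
  · rw [hk, hDdim, hΔdim]
    have hgrassmann' : (finrank ℂ ↥(E ⊔ conjE E) + finrank ℂ ↥(E ⊓ conjE E) : ℚ) =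
        2 * finrank ℂ E := by
      exact_mod_cast hgrassmann
    linarith
  · rw [hk, hs, hDdim, hV]
    ring

/-- For a lagrangian `L ⊆ 𝕋_ℂV` of order `s` and type `k`, one has
`k = (dim_ℝ D - dim_ℝ Δ)/2` and `k + s = dim_ℂ V_ℂ - dim_ℂ E`. -/
theorem stmt9 (V : Type*) [AddCommGroup V] [Module ℝ V] [FiniteDimensional ℝ V]
    (L : Submodule ℂ (TCx V)) (hL : IsLagrangianC L)
    (E : Submodule ℂ (Cx V)) (hE : E = Esub L)
    (D : Submodule ℝ V) (hD : D = ((E ⊔ conjE E).restrictScalars ℝ).comap iV)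
    (Δ : Submodule ℝ V) (hΔ : Δ = ((E ⊓ conjE E).restrictScalars ℝ).comap iV)
    (k s : ℕ)
    (hk : (k : ℚ) = (finrank ℂ ↥(E ⊔ conjE E) : ℚ) - (finrank ℂ ↥E : ℚ))
    (hs : (s : ℚ) = (finrank ℝ V : ℚ) - (finrank ℝ ↥D : ℚ)) :
    (k : ℚ) = ((finrank ℝ ↥D : ℚ) - (finrank ℝ ↥Δ : ℚ)) / 2 ∧
    (k : ℚ) + (s : ℚ) = (finrank ℂ (Cx V) : ℚ) - (finrank ℂ ↥E : ℚ) :=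
  stmt9_general V E D hD Δ hΔ k s hk hs
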